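/- Define S₂(e) = (1/e⁵)[ (1−e²) e (3+4e²) − √(1−e²) (3+2e²−4e⁴) arcsin(e) ] for e ∈ (0,1). Then S₂ has a unique zero e₀ ∈ (0,1); moreover S₂(e) > 0 for e < e₀ and S₂(e) < 0 for e > e₀, and 0.9528 < e₀ < 0.9529. -/

import Mathlib

open Real

noncomputable def S₂ (e : ℝ) : ℝ :=
  (1 / e ^ 5) * ((1 - e ^ 2) * e * (3 + 4 * e ^ 2)
    - Real.sqrt (1 - e ^ 2) * (3 + 2 * e ^ 2 - 4 * e ^ 4) * Real.arcsin e)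

/-!
Write `S₂ e = √(1 - e²) / e⁵ * f e`. The functions `f`, `φ`, `ψ` vanish at `0` and satisfy
`f' = 4 e φ`, `φ' = 2 e ψ`, `ψ' = (1 - 4e²)(2 - e²) / (1 - e²)^(5/2)`. So `ψ'` is positive and then
negative on `(0, 1)`, switching at `1/2`. A function vanishing at `0` whose derivative has this
sign pattern inherits it as soon as it takes a negative value; applied in turn to `ψ`, `φ` and
`f`, with negative values at `0.9529`, this shows that `f`, hence `S₂`, changes sign exactly once
on `(0, 1)`. The sign `f 0.9528 > 0` pins the zero from below; the two values of `f` are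
certified by bounding `arcsin` through the alternating sine series.
-/

open Set Filter Topology

namespace Real

open Finset
open scoped Nat

lemma antitone_sin_series_term {x : ℝ} (hx₀ : 0 ≤ x) (hx : x ≤ 2) :
    Antitone fun n : ℕ => x ^ (2 * n + 1) / (2 * n + 1)! := by
  refine antitone_nat_of_succ_le fun n => ?_
  have hfac : ((2 * (n + 1) + 1)! : ℝ) = (2 * n + 3) * (2 * n + 2) * (2 * n + 1)! := by
    rw [show 2 * (n + 1) + 1 = (2 * n + 1) + 1 + 1 by ring, Nat.factorial_succ,
      Nat.factorial_succ]
    push_cast; ring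
  rw [hfac, show 2 * (n + 1) + 1 = 2 * n + 1 + 2 by ring, pow_add,
    div_le_div_iff₀ (by positivity) (by positivity)]
  have hx2 : x ^ 2 ≤ (2 * n + 3) * (2 * n + 2) := by nlinarith
  calc x ^ (2 * n + 1) * x ^ 2 * (2 * n + 1)!
      ≤ x ^ (2 * n + 1) * ((2 * n + 3) * (2 * n + 2)) * (2 * n + 1)! := by gcongr
    _ = _ := by ring

lemma tendsto_sum_sin_series (x : ℝ) :
    Tendsto (fun n => ∑ i ∈ range n, (-1) ^ i * (x ^ (2 * i + 1) / (2 * i + 1)!)) atTop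
      (𝓝 (sin x)) := by
  simpa only [mul_div_assoc] using (hasSum_sin x).tendsto_sum_nat

lemma sum_sin_series_le_sin {x : ℝ} (hx₀ : 0 ≤ x) (hx : x ≤ 2) (k : ℕ) :
    ∑ i ∈ range (2 * k), (-1) ^ i * (x ^ (2 * i + 1) / (2 * i + 1)!) ≤ sin x :=
  (antitone_sin_series_term hx₀ hx).alternating_series_le_tendsto
    (tendsto_sum_sin_series x) k

lemma sin_le_sum_sin_series {x : ℝ} (hx₀ : 0 ≤ x) (hx : x ≤ 2) (k : ℕ) :
    sin x ≤ ∑ i ∈ range (2 * k + 1), (-1) ^ i * (x ^ (2 * i + 1) / (2 * i + 1)!) :=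
  (antitone_sin_series_term hx₀ hx).tendsto_le_alternating_series
    (tendsto_sum_sin_series x) k

end Real

def SignChange (F : ℝ → ℝ) (a c b : ℝ) : Prop :=
  (∀ x ∈ Ioo a c, 0 < F x) ∧ ∀ x ∈ Ioo c b, F x < 0

namespace SignChange

variable {F G g : ℝ → ℝ} {a b c : ℝ}

lemma of_eq_pos_mul (hG : SignChange G a c b) (hac : a ≤ c) (hcb : c ≤ b)
    (hg : ∀ x ∈ Ioo a b, 0 < g x) (hF : ∀ x ∈ Ioo a b, F x = g x * G x) :
    SignChange F a c b := by
  refine ⟨fun x hx => ?_, fun x hx => ?_⟩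
  · have hx' : x ∈ Ioo a b := ⟨hx.1, hx.2.trans_le hcb⟩
    rw [hF x hx']
    exact mul_pos (hg x hx') (hG.1 x hx)
  · have hx' : x ∈ Ioo a b := ⟨hac.trans_lt hx.1, hx.2⟩
    rw [hF x hx']
    exact mul_neg_of_pos_of_neg (hg x hx') (hG.2 x hx)

lemma exists_zero_of_deriv {x : ℝ} (hF' : SignChange G a c b) (hac : a < c) (hcx : c < x)
    (hxb : x < b) (hF : ContinuousOn F (Ico a b))
    (hderiv : ∀ y ∈ Ioo a b, HasDerivAt F (G y) y) (ha : F a = 0) (hx : F x < 0) :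
    ∃ z ∈ Ioo c x, F z = 0 ∧ SignChange F a z b := by
  have hmono : StrictMonoOn F (Icc a c) := by
    refine strictMonoOn_of_deriv_pos (convex_Icc a c) (hF.mono (Icc_subset_Ico_right
      (hcx.trans hxb))) fun y hy => ?_
    rw [interior_Icc] at hy
    rw [(hderiv y ⟨hy.1, hy.2.trans (hcx.trans hxb)⟩).deriv]
    exact hF'.1 y hy
  have hanti : StrictAntiOn F (Ico c b) := by
    refine strictAntiOn_of_deriv_neg (convex_Ico c b) (hF.mono (Ico_subset_Ico_left hac.le))
      fun y hy => ?_
    rw [interior_Ico] at hy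
    rw [(hderiv y ⟨hac.trans hy.1, hy.2⟩).deriv]
    exact hF'.2 y hy
  have hpos : ∀ y ∈ Ioc a c, 0 < F y := fun y hy =>
    ha ▸ hmono (left_mem_Icc.2 hac.le) (Ioc_subset_Icc_self hy) hy.1
  obtain ⟨z, hz, hFz⟩ : ∃ z ∈ Ioo c x, F z = 0 :=
    intermediate_value_Ioo' hcx.le (hF.mono (Icc_subset_Ico hac.le hxb))
      ⟨hx, hpos c ⟨hac, le_rfl⟩⟩
  have hzb : z ∈ Ico c b := ⟨hz.1.le, hz.2.trans hxb⟩
  refine ⟨z, hz, hFz, fun y hy => ?_, fun y hy => ?_⟩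
  · rcases le_or_gt y c with hyc | hcy
    · exact hpos y ⟨hy.1, hyc⟩
    · exact hFz ▸ hanti ⟨hcy.le, hy.2.trans hzb.2⟩ hzb hy.2
  · exact hFz ▸ hanti hzb ⟨hz.1.le.trans hy.1.le, hy.2⟩ hy.1

end SignChange

namespace Maclaurin

noncomputable def f (e : ℝ) : ℝ :=
  √(1 - e ^ 2) * e * (3 + 4 * e ^ 2) - (3 + 2 * e ^ 2 - 4 * e ^ 4) * arcsin e

noncomputable def φ (e : ℝ) : ℝ :=
  e * (1 - 3 * e ^ 2) / √(1 - e ^ 2) - (1 - 4 * e ^ 2) * arcsin e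

noncomputable def ψ (e : ℝ) : ℝ :=
  4 * arcsin e - e * (2 - e ^ 2) / ((1 - e ^ 2) * √(1 - e ^ 2))

variable {e : ℝ}

lemma one_sub_sq_pos (he : e ∈ Ioo (-1) 1) : 0 < 1 - e ^ 2 := by
  nlinarith [he.1, he.2]

lemma hasDerivAt_one_sub_sq (e : ℝ) : HasDerivAt (fun x => 1 - x ^ 2) (-(2 * e)) e := by
  simpa using (hasDerivAt_pow 2 e).const_sub 1

lemma hasDerivAt_sqrt_one_sub_sq (he : e ∈ Ioo (-1) 1) :
    HasDerivAt (fun x => √(1 - x ^ 2)) (-e / √(1 - e ^ 2)) e := by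
  refine ((hasDerivAt_one_sub_sq e).sqrt (one_sub_sq_pos he).ne').congr_deriv ?_
  field_simp

lemma hasDerivAt_arcsin_of_mem (he : e ∈ Ioo (-1) 1) :
    HasDerivAt arcsin (1 / √(1 - e ^ 2)) e :=
  hasDerivAt_arcsin he.1.ne' he.2.ne

lemma hasDerivAt_ψ (he : e ∈ Ioo (-1) 1) :
    HasDerivAt ψ ((1 - 4 * e ^ 2) * (2 - e ^ 2) / ((1 - e ^ 2) ^ 2 * √(1 - e ^ 2))) e := by
  have hu := one_sub_sq_pos he
  have hs : 0 < √(1 - e ^ 2) := sqrt_pos.2 hu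
  have hsq : √(1 - e ^ 2) ^ 2 = 1 - e ^ 2 := sq_sqrt hu.le
  have hnum : HasDerivAt (fun x => x * (2 - x ^ 2)) (1 * (2 - e ^ 2) + e * -(2 * e)) e :=
    (hasDerivAt_id' e).fun_mul (by simpa using (hasDerivAt_pow 2 e).const_sub 2)
  have hden := (hasDerivAt_one_sub_sq e).fun_mul (hasDerivAt_sqrt_one_sub_sq he)
  refine (((hasDerivAt_arcsin_of_mem he).const_mul 4).fun_sub
    (hnum.div hden (mul_pos hu hs).ne')).congr_deriv ?_
  set s := √(1 - e ^ 2)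
  field_simp
  linear_combination e ^ 2 * (2 - e ^ 2) * hsq

lemma hasDerivAt_φ (he : e ∈ Ioo (-1) 1) : HasDerivAt φ (2 * e * ψ e) e := by
  have hu := one_sub_sq_pos he
  have hs : 0 < √(1 - e ^ 2) := sqrt_pos.2 hu
  have hsq : √(1 - e ^ 2) ^ 2 = 1 - e ^ 2 := sq_sqrt hu.le
  have hnum : HasDerivAt (fun x => x * (1 - 3 * x ^ 2)) (1 * (1 - 3 * e ^ 2) + e * -(6 * e)) e :=
    (hasDerivAt_id' e).fun_mul
      ((((hasDerivAt_pow 2 e).const_mul 3).const_sub 1).congr_deriv (by push_cast; ring))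
  have hpoly : HasDerivAt (fun x => 1 - 4 * x ^ 2) (-(8 * e)) e :=
    (((hasDerivAt_pow 2 e).const_mul 4).const_sub 1).congr_deriv (by push_cast; ring)
  refine ((hnum.div (hasDerivAt_sqrt_one_sub_sq he) hs.ne').fun_sub
    (hpoly.fun_mul (hasDerivAt_arcsin_of_mem he))).congr_deriv ?_
  unfold ψ
  set s := √(1 - e ^ 2)
  field_simp
  linear_combination e ^ 2 * (3 * e ^ 2 - 1) * hsq

lemma hasDerivAt_f (he : e ∈ Ioo (-1) 1) : HasDerivAt f (4 * e * φ e) e := by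
  have hu := one_sub_sq_pos he
  have hs : 0 < √(1 - e ^ 2) := sqrt_pos.2 hu
  have hsq : √(1 - e ^ 2) ^ 2 = 1 - e ^ 2 := sq_sqrt hu.le
  have hpoly₁ : HasDerivAt (fun x => 3 + 4 * x ^ 2) (8 * e) e :=
    (((hasDerivAt_pow 2 e).const_mul 4).const_add 3).congr_deriv (by push_cast; ring)
  have hpoly₂ : HasDerivAt (fun x => 3 + 2 * x ^ 2 - 4 * x ^ 4)
      (4 * e - 16 * e ^ 3) e :=
    ((((hasDerivAt_pow 2 e).const_mul 2).const_add 3).fun_sub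
      ((hasDerivAt_pow 4 e).const_mul 4)).congr_deriv (by push_cast; ring)
  refine ((((hasDerivAt_sqrt_one_sub_sq he).fun_mul (hasDerivAt_id' e)).fun_mul hpoly₁).fun_sub
    (hpoly₂.fun_mul (hasDerivAt_arcsin_of_mem he))).congr_deriv ?_
  unfold φ
  set s := √(1 - e ^ 2)
  field_simp
  linear_combination (12 * e ^ 2 + 3) * hsq

lemma signChange_deriv_ψ :
    SignChange (fun e => (1 - 4 * e ^ 2) * (2 - e ^ 2) / ((1 - e ^ 2) ^ 2 * √(1 - e ^ 2)))
      0 (1 / 2) 1 := by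
  have hden : ∀ e ∈ Ioo (0 : ℝ) 1, 0 < (1 - e ^ 2) ^ 2 * √(1 - e ^ 2) := fun e he => by
    have := one_sub_sq_pos ⟨by linarith [he.1], he.2⟩
    positivity
  refine ⟨fun e he => div_pos ?_ (hden e ⟨he.1, by linarith [he.2]⟩),
    fun e he => div_neg_of_neg_of_pos ?_ (hden e ⟨by linarith [he.1], he.2⟩)⟩
  · exact mul_pos (by nlinarith [he.1, he.2]) (by nlinarith [he.1, he.2])
  · exact mul_neg_of_neg_of_pos (by nlinarith [he.1, he.2]) (by nlinarith [he.1, he.2])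

lemma continuousOn_Ico_of_hasDerivAt {F F' : ℝ → ℝ}
    (hF : ∀ e ∈ Ioo (-1 : ℝ) 1, HasDerivAt F (F' e) e) : ContinuousOn F (Ico 0 1) :=
  fun e he => (hF e ⟨by linarith [he.1], he.2⟩).continuousAt.continuousWithinAt

lemma exists_signChange_of_deriv {F G : ℝ → ℝ} {k c x : ℝ} (hk : 0 < k)
    (hG : SignChange G 0 c 1) (hc : 0 < c) (hcx : c < x) (hx : x < 1)
    (hF : ∀ e ∈ Ioo (-1 : ℝ) 1, HasDerivAt F (k * e * G e) e) (h0 : F 0 = 0) (hFx : F x < 0) :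
    ∃ z ∈ Ioo c x, F z = 0 ∧ SignChange F 0 z 1 :=
  (hG.of_eq_pos_mul (g := fun e => k * e) hc.le (hcx.trans hx).le
    (fun e he => mul_pos hk he.1) fun _ _ => rfl).exists_zero_of_deriv hc hcx hx
    (continuousOn_Ico_of_hasDerivAt hF) (fun e he => hF e ⟨by linarith [he.1], he.2⟩) h0 hFx

lemma arcsin_0_9528_lt : arcsin 0.9528 < 1.2625 := by
  have hsin := sum_sin_series_le_sin (x := 1.2625) (by norm_num) (by norm_num) 2
  norm_num [Finset.sum_range_succ, Nat.factorial] at hsin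
  rw [arcsin_lt_iff_lt_sin (by norm_num) ⟨by linarith [pi_gt_three], by linarith [pi_gt_three]⟩]
  norm_num; linarith

lemma lt_arcsin_0_9529 : 1.26263 < arcsin 0.9529 := by
  have hsin := sin_le_sum_sin_series (x := 1.26263) (by norm_num) (by norm_num) 2
  norm_num [Finset.sum_range_succ, Nat.factorial] at hsin
  rw [lt_arcsin_iff_sin_lt ⟨by linarith [pi_gt_three], by linarith [pi_gt_d2]⟩ (by norm_num)]
  norm_num; linarith

lemma sqrt_one_sub_sq_0_9529_le : √(1 - 0.9529 ^ 2) ≤ (0.30329 : ℝ) :=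
  sqrt_le_iff.2 ⟨by norm_num, by norm_num⟩

lemma le_sqrt_one_sub_sq_0_9528 : (0.30359 : ℝ) ≤ √(1 - 0.9528 ^ 2) :=
  le_sqrt_of_sq_le (by norm_num)

lemma ψ_0_9529_neg : ψ 0.9529 < 0 := by
  have hs : 0 < √(1 - (0.9529 : ℝ) ^ 2) := sqrt_pos.2 (by norm_num)
  have hfrac :
      (6.2832 : ℝ) < 0.9529 * (2 - 0.9529 ^ 2) / ((1 - 0.9529 ^ 2) * √(1 - 0.9529 ^ 2)) := by
    rw [lt_div_iff₀ (mul_pos (by norm_num) hs)]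
    nlinarith [sqrt_one_sub_sq_0_9529_le]
  unfold ψ
  linarith [arcsin_le_pi_div_two 0.9529, pi_lt_d4]

lemma φ_0_9529_neg : φ 0.9529 < 0 := by
  have hs : 0 < √(1 - (0.9529 : ℝ) ^ 2) := sqrt_pos.2 (by norm_num)
  have hfrac : 0.9529 * (1 - 3 * 0.9529 ^ 2) / √(1 - 0.9529 ^ 2)
      ≤ (0.9529 * (1 - 3 * 0.9529 ^ 2) / 0.30329 : ℝ) := by
    rw [div_le_div_iff₀ hs (by norm_num)]
    nlinarith [sqrt_one_sub_sq_0_9529_le]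
  unfold φ
  nlinarith [arcsin_le_pi_div_two 0.9529, pi_lt_d4]

lemma f_0_9529_neg : f 0.9529 < 0 := by
  unfold f
  nlinarith [sqrt_one_sub_sq_0_9529_le, lt_arcsin_0_9529]

lemma f_0_9528_pos : 0 < f 0.9528 := by
  unfold f
  nlinarith [le_sqrt_one_sub_sq_0_9528, arcsin_0_9528_lt,
    arcsin_pos.2 (by norm_num : (0 : ℝ) < 0.9528)]

lemma S₂_eq (he : e ^ 2 ≤ 1) : S₂ e = √(1 - e ^ 2) / e ^ 5 * f e := by
  have hsq : √(1 - e ^ 2) ^ 2 = 1 - e ^ 2 := sq_sqrt (by linarith)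
  unfold S₂ f
  linear_combination -(1 / e ^ 5 * e * (3 + 4 * e ^ 2)) * hsq

lemma signChange_S₂ {c : ℝ} (hf : SignChange f 0 c 1) (hc₀ : 0 ≤ c) (hc₁ : c ≤ 1) :
    SignChange S₂ 0 c 1 :=
  hf.of_eq_pos_mul hc₀ hc₁
    (fun e he => div_pos (sqrt_pos.2 (one_sub_sq_pos ⟨by linarith [he.1], he.2⟩)) (pow_pos he.1 5))
    fun e he => S₂_eq (by nlinarith [he.1, he.2])

lemma exists_zero_f : ∃ e₀ ∈ Ioo 0.9528 0.9529, f e₀ = 0 ∧ SignChange f 0 e₀ 1 := by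
  obtain ⟨a, ha, -, hψ⟩ := signChange_deriv_ψ.exists_zero_of_deriv (F := ψ) (x := 0.9529)
    (by norm_num) (by norm_num) (by norm_num) (continuousOn_Ico_of_hasDerivAt fun _ => hasDerivAt_ψ)
    (fun e he => hasDerivAt_ψ ⟨by linarith [he.1], he.2⟩) (by simp [ψ]) ψ_0_9529_neg
  obtain ⟨b, hb, -, hφ⟩ := exists_signChange_of_deriv two_pos hψ (by linarith [ha.1]) ha.2
    (by norm_num) (fun _ => hasDerivAt_φ) (by simp [φ]) φ_0_9529_neg
  obtain ⟨e₀, he₀, hf₀, hf⟩ := exists_signChange_of_deriv four_pos hφ (by linarith [ha.1, hb.1])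
    hb.2 (by norm_num) (fun _ => hasDerivAt_f) (by simp [f]) f_0_9529_neg
  refine ⟨e₀, ⟨?_, he₀.2⟩, hf₀, hf⟩
  by_contra! h
  rcases h.eq_or_lt with rfl | h
  · exact f_0_9528_pos.ne' hf₀
  · exact (hf.2 0.9528 ⟨h, by norm_num⟩).not_gt f_0_9528_pos

end Maclaurin

theorem maclaurin_critical_eccentricity :
    ∃ e₀ ∈ Set.Ioo (0 : ℝ) 1, S₂ e₀ = 0 ∧
      (∀ e ∈ Set.Ioo (0 : ℝ) 1, e < e₀ → 0 < S₂ e) ∧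
      (∀ e ∈ Set.Ioo (0 : ℝ) 1, e₀ < e → S₂ e < 0) ∧
      0.9528 < e₀ ∧ e₀ < 0.9529 := by
  obtain ⟨e₀, ⟨hlo, hhi⟩, hf₀, hf⟩ := Maclaurin.exists_zero_f
  have hS := Maclaurin.signChange_S₂ hf (by linarith) (by linarith)
  refine ⟨e₀, ⟨by linarith, by linarith⟩, ?_, fun e he h => hS.1 e ⟨he.1, h⟩,
    fun e he h => hS.2 e ⟨h, he.2⟩, hlo, hhi⟩
  rw [Maclaurin.S₂_eq (by nlinarith), hf₀, mul_zero]
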